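/- Let W ∈ ℝ^{n×n} be a mixing matrix with mixing rate α ∈ [0,1), let L > 0 and b ≥ 1 an integer, and for each i = 1,…,n let φ_{i,1}, …, φ_{i,b} : ℝ^d → ℝ be differentiable with L-Lipschitz gradients. Let u, u', v ∈ ℝ^{nd} with blocks u_i, u'_i, v_i, define g ∈ ℝ^{nd} blockwise by g_i = (1/b)·Σ_{j=1}^b (∇φ_{i,j}(u'_i) − ∇φ_{i,j}(u_i)) + v_i, and set v' = (W ⊗ I_d)·g with block average v̄'. Then ‖v' − 1_n ⊗ v̄'‖₂² ≤ (2α²/(1+α²))·‖v − 1_n ⊗ v̄‖₂² + (2α²L²/(1−α²))·‖u' − u‖₂², where v̄ is the block average of v. -/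

import Mathlib

open Finset

noncomputable section

/-- `ℝ^d` as a Euclidean space. -/
abbrev Vec (d : ℕ) := EuclideanSpace ℝ (Fin d)

/-- `ℝ^{nd}` as a stack of `n` blocks in `ℝ^d`, with the Euclidean (ℓ₂) norm. -/
abbrev Stacked (n d : ℕ) := PiLp 2 (fun _ : Fin n => Vec d)

/-- Block average `x̄ = (1/n) Σᵢ xᵢ` of a stacked vector. -/
def blockAvg {n d : ℕ} (x : Stacked n d) : Vec d := (n : ℝ)⁻¹ • ∑ i, x i

/-- The stacked vector `1ₙ ⊗ y` whose every block equals `y`. -/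
def stack (n : ℕ) {d : ℕ} (y : Vec d) : Stacked n d := WithLp.toLp 2 (fun _ => y)

/-- Action of `W ⊗ I_d` on a stacked vector. -/
def kronApply {n d : ℕ} (W : Matrix (Fin n) (Fin n) ℝ) (x : Stacked n d) : Stacked n d :=
  WithLp.toLp 2 (fun i => ∑ j, W i j • x j)

/-- A mixing matrix: `W·1ₙ = 1ₙ` and `Wᵀ·1ₙ = 1ₙ`. -/
def IsMixing {n : ℕ} (W : Matrix (Fin n) (Fin n) ℝ) : Prop :=
  W.mulVec (fun _ => 1) = (fun _ => 1) ∧ Matrix.vecMul (fun _ => 1) W = (fun _ => 1)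

/-- The mixing rate `α = ‖W − (1/n)1ₙ1ₙᵀ‖_op` (ℓ₂ operator norm). -/
def mixingRate {n : ℕ} (W : Matrix (Fin n) (Fin n) ℝ) : ℝ :=
  ‖LinearMap.toContinuousLinearMap
    (Matrix.toEuclideanLin (W - (n : ℝ)⁻¹ • Matrix.of fun _ _ => (1 : ℝ)))‖

/-!
The mixing step preserves block averages and fixes consensus vectors `1ₙ ⊗ y`, so the consensus
error of `v'` is `((W − J) ⊗ I_d)(Δ + (v − 1ₙ ⊗ v̄))`, where `J = (1/n)1ₙ1ₙᵀ` and `Δ` is the stacked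
averaged gradient difference. Acting on each coordinate slice separately, `(W − J) ⊗ I_d` has
operator norm at most `α`, and `‖Δ‖ ≤ L‖u' − u‖` blockwise by the Lipschitz bounds. Squaring and
splitting with Young's inequality gives the two constants.
-/

def averagingMatrix (n : ℕ) : Matrix (Fin n) (Fin n) ℝ := (n : ℝ)⁻¹ • Matrix.of fun _ _ => 1

theorem PiLp.norm_le_mul_of_forall_norm_le {ι : Type*} [Fintype ι] {β γ : ι → Type*}
    [∀ i, SeminormedAddCommGroup (β i)] [∀ i, SeminormedAddCommGroup (γ i)]
    {x : PiLp 2 β} {y : PiLp 2 γ} {L : ℝ} (hL : 0 ≤ L) (h : ∀ i, ‖x i‖ ≤ L * ‖y i‖) :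
    ‖x‖ ≤ L * ‖y‖ := by
  refine (pow_le_pow_iff_left₀ (norm_nonneg x) (by positivity) two_ne_zero).mp ?_
  calc ‖x‖ ^ 2 = ∑ i, ‖x i‖ ^ 2 := PiLp.norm_sq_eq_of_L2 β x
    _ ≤ ∑ i, (L * ‖y i‖) ^ 2 := by gcongr with i; exact h i
    _ = (L * ‖y‖) ^ 2 := by simp_rw [mul_pow, ← Finset.mul_sum, PiLp.norm_sq_eq_of_L2 γ y]

theorem norm_inv_natCast_smul_sum_le {E : Type*} [SeminormedAddCommGroup E] [NormedSpace ℝ E]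
    {b : ℕ} (z : Fin b → E) {C : ℝ} (hC : 0 ≤ C) (h : ∀ j, ‖z j‖ ≤ C) :
    ‖(b : ℝ)⁻¹ • ∑ j, z j‖ ≤ C := by
  rcases b.eq_zero_or_pos with rfl | hb
  · simpa using hC
  calc ‖(b : ℝ)⁻¹ • ∑ j, z j‖ ≤ (b : ℝ)⁻¹ * (b * C) := by
        rw [norm_smul, norm_inv, RCLike.norm_natCast]
        gcongr
        simpa using norm_sum_le_of_le Finset.univ fun j _ => h j
    _ = C := by field_simp

section Kronecker

variable {n d : ℕ}

@[simp]
theorem kronApply_apply (M : Matrix (Fin n) (Fin n) ℝ) (x : Stacked n d) (i : Fin n) :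
    kronApply M x i = ∑ j, M i j • x j := rfl

@[simp]
theorem stack_apply (y : Vec d) (i : Fin n) : stack n y i = y := rfl

theorem kronApply_sub_left (M N : Matrix (Fin n) (Fin n) ℝ) (x : Stacked n d) :
    kronApply (M - N) x = kronApply M x - kronApply N x := by
  ext1 i
  simp [sub_smul]

theorem kronApply_add (M : Matrix (Fin n) (Fin n) ℝ) (x y : Stacked n d) :
    kronApply M (x + y) = kronApply M x + kronApply M y := by
  ext1 i
  simp [Finset.sum_add_distrib]

theorem kronApply_averagingMatrix (x : Stacked n d) :
    kronApply (averagingMatrix n) x = stack n (blockAvg x) := by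
  ext1 i
  simp [averagingMatrix, blockAvg, Finset.smul_sum]

theorem kronApply_stack {M : Matrix (Fin n) (Fin n) ℝ} (hM : ∀ i, ∑ j, M i j = 1) (y : Vec d) :
    kronApply M (stack n y) = stack n y := by
  ext1 i
  simp [← Finset.sum_smul, hM i]

theorem blockAvg_kronApply {M : Matrix (Fin n) (Fin n) ℝ} (hM : ∀ j, ∑ i, M i j = 1)
    (x : Stacked n d) : blockAvg (kronApply M x) = blockAvg x := by
  simp only [blockAvg, kronApply_apply]
  rw [Finset.sum_comm]
  simp [← Finset.sum_smul, hM]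

theorem averagingMatrix_sum_row (i : Fin n) : ∑ j, averagingMatrix n i j = 1 := by
  have : (n : ℝ) ≠ 0 := Nat.cast_ne_zero.2 i.pos.ne'
  simp [averagingMatrix, this]

def coordSlice (x : Stacked n d) (k : Fin d) : EuclideanSpace ℝ (Fin n) :=
  WithLp.toLp 2 fun i => x i k

theorem norm_sq_eq_sum_coordSlice (x : Stacked n d) : ‖x‖ ^ 2 = ∑ k, ‖coordSlice x k‖ ^ 2 := by
  simp_rw [PiLp.norm_sq_eq_of_L2]
  rw [Finset.sum_comm]; rfl

theorem coordSlice_kronApply (M : Matrix (Fin n) (Fin n) ℝ) (x : Stacked n d) (k : Fin d) :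
    coordSlice (kronApply M x) k = Matrix.toEuclideanLin M (coordSlice x k) := by
  ext i
  simp [coordSlice, Matrix.mulVec, dotProduct]

theorem norm_kronApply_le (M : Matrix (Fin n) (Fin n) ℝ) (x : Stacked n d) :
    ‖kronApply M x‖ ≤ ‖LinearMap.toContinuousLinearMap (Matrix.toEuclideanLin M)‖ * ‖x‖ := by
  set T := LinearMap.toContinuousLinearMap (Matrix.toEuclideanLin M)
  refine (pow_le_pow_iff_left₀ (norm_nonneg _) (by positivity) two_ne_zero).mp ?_
  calc ‖kronApply M x‖ ^ 2 = ∑ k, ‖T (coordSlice x k)‖ ^ 2 := by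
        simp_rw [norm_sq_eq_sum_coordSlice, coordSlice_kronApply]; rfl
    _ ≤ ∑ k, (‖T‖ * ‖coordSlice x k‖) ^ 2 := by gcongr with k; exact T.le_opNorm _
    _ = (‖T‖ * ‖x‖) ^ 2 := by simp_rw [mul_pow, ← Finset.mul_sum, norm_sq_eq_sum_coordSlice]

namespace IsMixing

variable {W : Matrix (Fin n) (Fin n) ℝ}

theorem sum_row (hW : IsMixing W) (i : Fin n) : ∑ j, W i j = 1 := by
  simpa [Matrix.mulVec, dotProduct] using congrFun hW.1 i

theorem sum_col (hW : IsMixing W) (j : Fin n) : ∑ i, W i j = 1 := by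
  simpa [Matrix.vecMul, dotProduct] using congrFun hW.2 j

theorem kronApply_sub_stack_blockAvg (hW : IsMixing W) (x : Stacked n d) :
    kronApply W x - stack n (blockAvg (kronApply W x)) = kronApply (W - averagingMatrix n) x := by
  rw [blockAvg_kronApply hW.sum_col, kronApply_sub_left, kronApply_averagingMatrix]

theorem kronApply_sub_averagingMatrix_add_stack (hW : IsMixing W) (x : Stacked n d) (y : Vec d) :
    kronApply (W - averagingMatrix n) (x + stack n y) = kronApply (W - averagingMatrix n) x := by
  rw [kronApply_add, kronApply_sub_left (x := stack n y), kronApply_stack hW.sum_row,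
    kronApply_stack averagingMatrix_sum_row, sub_self, add_zero]

theorem norm_consensusError_le (hW : IsMixing W) (x y : Stacked n d) :
    ‖kronApply W (x + y) - stack n (blockAvg (kronApply W (x + y)))‖ ≤
      mixingRate W * (‖x‖ + ‖y - stack n (blockAvg y)‖) := by
  have hy : x + y = x + (y - stack n (blockAvg y)) + stack n (blockAvg y) := by abel
  rw [hW.kronApply_sub_stack_blockAvg, hy, hW.kronApply_sub_averagingMatrix_add_stack]
  exact (norm_kronApply_le _ _).trans
    (mul_le_mul_of_nonneg_left (norm_add_le _ _) (norm_nonneg _))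

end IsMixing

end Kronecker

/-- Young's inequality `(a + c)² ≤ (1 + t) a² + (1 + 1/t) c²` with `t = (1 - α²)/(1 + α²)`. -/
theorem add_sq_le_weighted_of_mem_Ico {α : ℝ} (hα : α ∈ Set.Ico (0 : ℝ) 1) (a c : ℝ) :
    (a + c) ^ 2 ≤ 2 / (1 + α ^ 2) * a ^ 2 + 2 / (1 - α ^ 2) * c ^ 2 := by
  have hpos : 0 < 1 + α ^ 2 := by positivity
  have hneg : 0 < 1 - α ^ 2 := by nlinarith [hα.1, hα.2]
  rw [div_mul_eq_mul_div, div_mul_eq_mul_div, div_add_div _ _ hpos.ne' hneg.ne',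
    le_div_iff₀ (by positivity)]
  nlinarith [sq_nonneg ((1 - α ^ 2) * a - (1 + α ^ 2) * c)]

theorem gradient_consensus_error_step_general {n d : ℕ} (W : Matrix (Fin n) (Fin n) ℝ) (α : ℝ)
    (hW : IsMixing W) (hα : α = mixingRate W) (hα1 : α ∈ Set.Ico (0 : ℝ) 1)
    (L : ℝ) (hL : 0 < L) (b : ℕ)
    (φ : Fin n → Fin b → Vec d → ℝ)
    (hlip : ∀ i j, ∀ x y : Vec d,
      ‖gradient (φ i j) x - gradient (φ i j) y‖ ≤ L * ‖x - y‖)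
    (u u' v : Stacked n d) (g : Stacked n d)
    (hg : g = fun i =>
      ((b : ℝ)⁻¹ • ∑ j, (gradient (φ i j) (u' i) - gradient (φ i j) (u i))) + v i)
    (v' : Stacked n d) (hv' : v' = kronApply W g) :
    ‖v' - stack n (blockAvg v')‖ ^ 2 ≤
      (2 * α ^ 2 / (1 + α ^ 2)) * ‖v - stack n (blockAvg v)‖ ^ 2
      + (2 * α ^ 2 * L ^ 2 / (1 - α ^ 2)) * ‖u' - u‖ ^ 2 := by
  set Δ : Stacked n d := WithLp.toLp 2 fun i =>
    (b : ℝ)⁻¹ • ∑ j, (gradient (φ i j) (u' i) - gradient (φ i j) (u i))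
  have hΔ : ‖Δ‖ ≤ L * ‖u' - u‖ :=
    PiLp.norm_le_mul_of_forall_norm_le hL.le fun i =>
      norm_inv_natCast_smul_sum_le _ (by positivity) fun j => hlip i j _ _
  have hv'_le :
      ‖v' - stack n (blockAvg v')‖ ≤ α * (L * ‖u' - u‖ + ‖v - stack n (blockAvg v)‖) := by
    have hg' : g = Δ + v := PiLp.ext fun i => congrFun hg i
    rw [hv', hg']
    exact (hα ▸ hW.norm_consensusError_le Δ v).trans
      (mul_le_mul_of_nonneg_left (by gcongr) hα1.1)
  calc ‖v' - stack n (blockAvg v')‖ ^ 2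
      ≤ α ^ 2 * (‖v - stack n (blockAvg v)‖ + L * ‖u' - u‖) ^ 2 := by
        rw [← mul_pow, add_comm]; gcongr
    _ ≤ α ^ 2 * (2 / (1 + α ^ 2) * ‖v - stack n (blockAvg v)‖ ^ 2
          + 2 / (1 - α ^ 2) * (L * ‖u' - u‖) ^ 2) := by
        gcongr
        exact add_sq_le_weighted_of_mem_Ico hα1 _ _
    _ = _ := by ring

/-- Gradient-consensus-error step for the stochastic recursive
gradient update: with `gᵢ = (1/b)Σⱼ(∇φ_{i,j}(u'ᵢ) − ∇φ_{i,j}(uᵢ)) + vᵢ` and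
`v' = (W ⊗ I_d)g`, one has
`‖v' − 1ₙ⊗v̄'‖² ≤ (2α²/(1+α²))‖v − 1ₙ⊗v̄‖² + (2α²L²/(1−α²))‖u' − u‖²`. -/
theorem gradient_consensus_error_step {n d : ℕ} (W : Matrix (Fin n) (Fin n) ℝ) (α : ℝ)
    (hW : IsMixing W) (hα : α = mixingRate W) (hα1 : α ∈ Set.Ico (0 : ℝ) 1)
    (L : ℝ) (hL : 0 < L) (b : ℕ) (hb : 1 ≤ b)
    (φ : Fin n → Fin b → Vec d → ℝ)
    (hdiff : ∀ i j, Differentiable ℝ (φ i j))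
    (hlip : ∀ i j, ∀ x y : Vec d,
      ‖gradient (φ i j) x - gradient (φ i j) y‖ ≤ L * ‖x - y‖)
    (u u' v : Stacked n d) (g : Stacked n d)
    (hg : g = fun i =>
      ((b : ℝ)⁻¹ • ∑ j, (gradient (φ i j) (u' i) - gradient (φ i j) (u i))) + v i)
    (v' : Stacked n d) (hv' : v' = kronApply W g) :
    ‖v' - stack n (blockAvg v')‖ ^ 2 ≤
      (2 * α ^ 2 / (1 + α ^ 2)) * ‖v - stack n (blockAvg v)‖ ^ 2
      + (2 * α ^ 2 * L ^ 2 / (1 - α ^ 2)) * ‖u' - u‖ ^ 2 :=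
  gradient_consensus_error_step_general W α hW hα hα1 L hL b φ hlip u u' v g hg v' hv'

end
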